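/- arXiv:2105.08003 — 2 statements merged into one kernel-verified Lean document; each statement's English description precedes it below -/
import Mathlib

section
/- Let T = p_1^{e_1} ··· p_r^{e_r} be the prime factorization of an odd integer T ≥ 3 with pairwise distinct primes p_1, ..., p_r and e_i ≥ 1. Then for every non-constant sequence (s_n) over F_2 of period T, the linear complexity satisfies L(s_n) ≥ min{ord_{p_1}(2), ..., ord_{p_r}(2)} + S(1), where S(1) = Σ_{n=0}^{T-1} s_n computed in F_2 and identified with an element of {0, 1}, and ord_m(2) denotes the multiplicative order of 2 modulo m. -/
/-!
Write `Φ = 1 + X + ⋯ + X^(T-1)`, so that `X^T - 1 = Φ * (X - 1)`, and let `S` be the generating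
polynomial of the sequence. As `T` is odd, `X^T - 1` is separable over `𝔽₂`, so `Φ` is squarefree.
Since `deg S < T` and the sequence is non-constant, `Φ ∤ S`, hence some irreducible factor `f` of
`Φ` does not divide `S`, and then `f` divides the cofactor `(X^T - 1) / gcd(X^T - 1, S)`, whose
degree is the linear complexity. A root of `f` has multiplicative order `d ≠ 1` dividing both `T`
and `2^(deg f) - 1`, so any prime `q ∣ d` divides `T` and satisfies `ord_q(2) ∣ deg f`.
If moreover `S(1) = 1`, then `X - 1` divides the cofactor as well, and it is coprime to `f`
because `Φ(1) = T = 1`; this gains the extra `1`.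
-/

open Polynomial Finset

theorem Squarefree.exists_irreducible_dvd_not_dvd {α : Type*} [CommMonoidWithZero α]
    [Nontrivial α] [GCDMonoid α] [WfDvdMonoid α] {a b : α} (ha : Squarefree a) (hab : ¬a ∣ b) :
    ∃ p, Irreducible p ∧ p ∣ a ∧ ¬p ∣ b := by
  obtain ⟨e, he⟩ := gcd_dvd_left a b
  have he0 : e ≠ 0 := right_ne_zero_of_mul (he ▸ ha.ne_zero)
  have he_unit : ¬IsUnit e := fun hu => hab (he ▸ hu.mul_right_dvd.2 (gcd_dvd_right a b))
  obtain ⟨p, hp, hpe⟩ := WfDvdMonoid.exists_irreducible_factor he_unit he0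
  have hpa : p ∣ a := hpe.trans (Dvd.intro_left _ he.symm)
  -- `p ∣ b` would give `p * p ∣ gcd a b * e = a`
  refine ⟨p, hp, hpa, fun hpb => hp.not_isUnit (ha p ?_)⟩
  rw [he]
  exact mul_dvd_mul (dvd_gcd hpa hpb) hpe

theorem FiniteField.exists_mem_primeFactors_dvd_card_sub_one {K : Type*} [Field K] [Fintype K]
    {α : K} {T : ℕ} (hT : T ≠ 0) (hαT : α ^ T = 1) (hα1 : α ≠ 1) :
    ∃ q ∈ T.primeFactors, q ∣ Fintype.card K - 1 := by
  have hα0 : α ≠ 0 := by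
    rintro rfl
    exact zero_ne_one ((zero_pow hT).symm.trans hαT)
  have hord1 : orderOf α ≠ 1 := fun h => hα1 (orderOf_eq_one_iff.mp h)
  refine ⟨(orderOf α).minFac, Nat.mem_primeFactors.2 ⟨Nat.minFac_prime hord1, ?_, hT⟩, ?_⟩
  · exact (Nat.minFac_dvd _).trans (orderOf_dvd_of_pow_eq_one hαT)
  · exact (Nat.minFac_dvd _).trans (orderOf_dvd_of_pow_eq_one (pow_card_sub_one_eq_one α hα0))

theorem Irreducible.exists_mem_primeFactors_orderOf_dvd_natDegree {F : Type*} [Field F]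
    [Fintype F] {f : F[X]} (hf : Irreducible f) {T : ℕ} (hT : T ≠ 0) (hfT : f ∣ X ^ T - 1)
    (hf1 : ¬f.IsRoot 1) :
    ∃ q ∈ T.primeFactors, orderOf (Fintype.card F : ZMod q) ∣ f.natDegree := by
  have := Fact.mk hf
  let pb := AdjoinRoot.powerBasis hf.ne_zero
  let _ : Fintype (AdjoinRoot f) := Module.fintypeOfFintype pb.basis
  have hcard : Fintype.card (AdjoinRoot f) = Fintype.card F ^ f.natDegree := by
    rw [Module.card_eq_pow_finrank (K := F), pb.finrank, AdjoinRoot.powerBasis_dim]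
  have hαT : AdjoinRoot.root f ^ T = 1 := by
    simpa [sub_eq_zero] using AdjoinRoot.mk_eq_zero.2 hfT
  have hα1 : AdjoinRoot.root f ≠ 1 := by
    intro h
    have := AdjoinRoot.eval₂_root f
    rw [h, eval₂_at_one, map_eq_zero_iff _ (AdjoinRoot.of f).injective] at this
    exact hf1 this
  obtain ⟨q, hq, hqdvd⟩ := FiniteField.exists_mem_primeFactors_dvd_card_sub_one hT hαT hα1
  refine ⟨q, hq, orderOf_dvd_of_pow_eq_one ?_⟩
  rw [hcard] at hqdvd
  rw [← Nat.cast_pow, ← Nat.cast_one, eq_comm, ZMod.natCast_eq_natCast_iff,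
    Nat.modEq_iff_dvd' (Nat.one_le_pow _ _ Fintype.card_pos)]
  exact hqdvd

namespace Polynomial

section Field

variable {K : Type*} [Field K]

theorem natDegree_le_natDegree_sub_natDegree_gcd [DecidableEq K[X]] {a b d : K[X]}
    (ha : a ≠ 0) (hda : d ∣ a) (hdb : IsCoprime d b) :
    d.natDegree ≤ a.natDegree - (EuclideanDomain.gcd a b).natDegree := by
  obtain ⟨h, hh⟩ := EuclideanDomain.gcd_dvd_left a b
  have hh0 : h ≠ 0 := right_ne_zero_of_mul (hh ▸ ha)
  have hdeg : a.natDegree = (EuclideanDomain.gcd a b).natDegree + h.natDegree := by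
    conv_lhs => rw [hh]
    exact natDegree_mul (left_ne_zero_of_mul (hh ▸ ha)) hh0
  have hdh : d ∣ h :=
    (hdb.of_isCoprime_of_dvd_right (EuclideanDomain.gcd_dvd_right a b)).dvd_of_dvd_mul_left
      (hh ▸ hda)
  have := natDegree_le_of_dvd hdh hh0
  omega

theorem natDegree_add_one_le_natDegree_sub_natDegree_gcd [DecidableEq K[X]] {a b f : K[X]}
    (ha : a ≠ 0) (hf : Irreducible f) (hfa : f ∣ a) (hfb : ¬f ∣ b) (hf1 : ¬f.IsRoot 1)
    (ha1 : a.IsRoot 1) (hb1 : ¬b.IsRoot 1) :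
    f.natDegree + 1 ≤ a.natDegree - (EuclideanDomain.gcd a b).natDegree := by
  have hX1 := irreducible_X_sub_C (1 : K)
  have hX1f : IsCoprime (X - C 1) f := hX1.coprime_iff_not_dvd.2 (by rwa [dvd_iff_isRoot])
  have hX1b : IsCoprime (X - C 1) b := hX1.coprime_iff_not_dvd.2 (by rwa [dvd_iff_isRoot])
  have := natDegree_le_natDegree_sub_natDegree_gcd ha
    (hX1f.mul_dvd (dvd_iff_isRoot.2 ha1) hfa) (hX1b.mul_left (hf.coprime_iff_not_dvd.2 hfb))
  rwa [natDegree_mul (X_sub_C_ne_zero 1) hf.ne_zero, natDegree_X_sub_C, add_comm] at this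

theorem squarefree_geom_sum_X {T : ℕ} (hT : (T : K) ≠ 0) :
    Squarefree (∑ i ∈ range T, (X : K[X]) ^ i) := by
  refine Squarefree.squarefree_of_dvd (Dvd.intro _ (geom_sum_mul X T)) ?_
  simpa using (separable_X_pow_sub_C (1 : K) hT one_ne_zero).squarefree

end Field

section CommRing

variable {R : Type*} [CommRing R]

theorem coeff_sum_range_C_mul_X_pow (s : ℕ → R) (T n : ℕ) :
    (∑ i ∈ range T, C (s i) * X ^ i).coeff n = if n < T then s n else 0 := by
  simp [finsetSum_coeff]

variable [Nontrivial R]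

theorem natDegree_geom_sum_X {T : ℕ} (hT : T ≠ 0) :
    (∑ i ∈ range T, (X : R[X]) ^ i).natDegree = T - 1 := by
  have h := congrArg natDegree (geom_sum_mul (X : R[X]) T)
  rw [← C_1, (monic_geom_sum_X hT).natDegree_mul' (X_sub_C_ne_zero 1), natDegree_X_sub_C,
    natDegree_X_pow_sub_C] at h
  omega

theorem coeff_eq_coeff_zero_of_geom_sum_X_dvd {T : ℕ} {S : R[X]} (hS : S.natDegree < T)
    (hdvd : (∑ i ∈ range T, (X : R[X]) ^ i) ∣ S) {n : ℕ} (hn : n < T) :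
    S.coeff n = S.coeff 0 := by
  obtain ⟨u, rfl⟩ := hdvd
  rcases eq_or_ne u 0 with rfl | hu
  · simp
  rw [(monic_geom_sum_X (by omega)).natDegree_mul' hu, natDegree_geom_sum_X (by omega)] at hS
  rw [eq_C_of_natDegree_eq_zero (by omega : u.natDegree = 0)]
  simp [coeff_mul_C, finsetSum_coeff, coeff_X_pow, hn, (by omega : 0 < T)]

theorem geom_sum_X_not_dvd_sum_C_mul_X_pow {s : ℕ → R} {T a b : ℕ} (ha : a < T) (hb : b < T)
    (hab : s a ≠ s b) : ¬(∑ i ∈ range T, (X : R[X]) ^ i) ∣ ∑ n ∈ range T, C (s n) * X ^ n := by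
  intro hdvd
  have hdeg : (∑ n ∈ range T, C (s n) * X ^ n).natDegree ≤ T - 1 :=
    natDegree_le_iff_coeff_eq_zero.2 fun N hN => by
      simp only [coeff_sum_range_C_mul_X_pow, ite_eq_right_iff]
      omega
  have hconst : ∀ n < T, (∑ n ∈ range T, C (s n) * X ^ n).coeff n = s 0 := fun n hn => by
    rw [coeff_eq_coeff_zero_of_geom_sum_X_dvd (by omega) hdvd hn, coeff_sum_range_C_mul_X_pow,
      if_pos (by omega)]
  apply hab
  simpa [coeff_sum_range_C_mul_X_pow, ha, hb] using (hconst a ha).trans (hconst b hb).symm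

end CommRing

end Polynomial

/-- Let `T ≥ 3` be odd. For every non-constant sequence `(s_n)` over `F_2` of period `T`,
the linear complexity `L(s_n) = T - deg(gcd(X^T - 1, S(X)))` satisfies
`L(s_n) ≥ min{ord_{q}(2) : q prime, q ∣ T} + S(1)`, where `S(1) = Σ_{n<T} s_n ∈ F_2`
is identified with an element of `{0, 1}`. -/
theorem linear_complexity_lower_bound_general (T : ℕ) (hT : 3 ≤ T) (hodd : Odd T)
    (s : ℕ → ZMod 2)
    (hnc : ∃ n, n < T ∧ ∃ m, m < T ∧ s n ≠ s m) :
    T.primeFactors.inf' (Nat.nonempty_primeFactors.mpr (by omega))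
        (fun q => orderOf ((2 : ZMod q))) +
      (∑ n ∈ Finset.range T, s n).val ≤
    T - (EuclideanDomain.gcd ((X : Polynomial (ZMod 2)) ^ T - 1)
          (∑ n ∈ Finset.range T, Polynomial.C (s n) * X ^ n)).natDegree := by
  obtain ⟨a, ha, b, hb, hab⟩ := hnc
  have hT2 : (T : ZMod 2) ≠ 0 := ZMod.natCast_ne_zero_iff_odd.2 hodd
  obtain ⟨f, hf, hfΦ, hfS⟩ := (squarefree_geom_sum_X hT2).exists_irreducible_dvd_not_dvd
    (geom_sum_X_not_dvd_sum_C_mul_X_pow ha hb hab)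
  have hfP : f ∣ X ^ T - 1 := hfΦ.trans (Dvd.intro _ (geom_sum_mul X T))
  have hf1 : ¬f.IsRoot 1 := fun h =>
    hT2 (by simpa [eval_geom_sum] using eval_eq_zero_of_dvd_of_eval_eq_zero hfΦ h)
  obtain ⟨q, hq, hqf⟩ := hf.exists_mem_primeFactors_orderOf_dvd_natDegree (by omega) hfP hf1
  have hmin := (inf'_le (fun q => orderOf (2 : ZMod q)) hq).trans
    (Nat.le_of_dvd hf.natDegree_pos (by simpa using hqf))
  have hP0 : (X ^ T - 1 : (ZMod 2)[X]) ≠ 0 := by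
    rw [← C_1]; exact X_pow_sub_C_ne_zero (by omega) 1
  have hPdeg : (X ^ T - 1 : (ZMod 2)[X]).natDegree = T := by
    rw [← C_1]; exact natDegree_X_pow_sub_C
  rcases (by decide : ∀ c : ZMod 2, c = 0 ∨ c = 1) (∑ n ∈ range T, s n) with h0 | h1
  · have := natDegree_le_natDegree_sub_natDegree_gcd hP0 hfP (hf.coprime_iff_not_dvd.2 hfS)
    rw [h0, ZMod.val_zero]
    omega
  · have := natDegree_add_one_le_natDegree_sub_natDegree_gcd hP0 hf hfP hfS hf1 (by simp)
      (by simp [IsRoot, eval_finsetSum, h1])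
    rw [h1, ZMod.val_one]
    omega
end

section
/- Let p ≥ 11 be a prime with p ≡ 1 (mod 4). Then S(1) = Σ_{n=0}^{T-1} s_n = 1 in F_2; that is, the sum Σ_{n=0}^{T-1} s_n over one period of the sequence (s_n) is odd. -/
/-!
Modulo 2 the period sum telescopes: `Σ (g_{n+1} + g_{n+2}) ≡ g_1 + g_{φ(p-1)}`, the smallest
plus the largest primitive root. When `4 ∣ p - 1`, negation preserves multiplicative orders in
`ZMod p`, so `g ↦ p - g` permutes the primitive roots in `[1, p)`; hence the smallest and the
largest add up to `p`, which is odd.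
-/

/-- The primitive roots modulo `p` in increasing order: `g_1 < g_2 < … < g_{φ(p-1)}`
(0-indexed as a sorted list). -/
noncomputable def primRootsList (p : ℕ) : List ℕ :=
  ((Finset.Ico 1 p).filter fun g : ℕ => orderOf ((g : ZMod p)) = p - 1).sort (· ≤ ·)

/-- The binary sequence `s_n ≡ g_{n+1} + g_{n+2} (mod 2)` of period `T = φ(p-1) - 1`,
extended `T`-periodically. -/
noncomputable def seqS (p n : ℕ) : ℕ :=
  ((primRootsList p).getD (n % (Nat.totient (p - 1) - 1)) 0 +
    (primRootsList p).getD (n % (Nat.totient (p - 1) - 1) + 1) 0) % 2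

open Finset

theorem orderOf_neg_eq_of_four_dvd {M : Type*} [Monoid M] [HasDistribNeg M] {x : M}
    (h4 : 4 ∣ orderOf x) : orderOf (-x) = orderOf x := by
  have hx_even : Even (orderOf x) := even_iff_two_dvd.mpr ((by norm_num : 2 ∣ 4).trans h4)
  have h_dvd : orderOf (-x) ∣ orderOf x :=
    orderOf_dvd_of_pow_eq_one (by rw [hx_even.neg_pow, pow_orderOf_eq_one])
  have h_dvd_two_mul : orderOf x ∣ 2 * orderOf (-x) :=
    orderOf_dvd_of_pow_eq_one
      (by rw [← (even_two_mul _).neg_pow, pow_mul', pow_orderOf_eq_one, one_pow])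
  have hneg_even : Even (orderOf (-x)) :=
    even_iff_two_dvd.mpr (Nat.dvd_of_mul_dvd_mul_left two_pos (h4.trans h_dvd_two_mul))
  refine h_dvd.antisymm (orderOf_dvd_of_pow_eq_one ?_)
  rw [← hneg_even.neg_pow, pow_orderOf_eq_one]

theorem CharTwo.sum_range_add_succ {R : Type*} [CommRing R] [CharP R 2] (f : ℕ → R) (n : ℕ) :
    ∑ i ∈ range n, (f i + f (i + 1)) = f 0 + f n := by
  simpa only [CharTwo.sub_eq_add, add_comm] using Finset.sum_range_sub f n

theorem Finset.getD_sort_zero {α : Type*} [LinearOrder α] (s : Finset α) (hs : s.Nonempty)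
    (d : α) : (s.sort (· ≤ ·)).getD 0 d = s.min' hs := by
  rw [List.getD_eq_getElem _ _ (by simpa using hs.card_pos), min'_eq_sorted_zero]

theorem Finset.getD_sort_card_sub_one {α : Type*} [LinearOrder α] (s : Finset α)
    (hs : s.Nonempty) (d : α) : (s.sort (· ≤ ·)).getD (#s - 1) d = s.max' hs := by
  rw [List.getD_eq_getElem _ _ (by simpa using Nat.sub_lt hs.card_pos one_pos),
    max'_eq_sorted_last]
  simp

theorem Finset.min'_add_max'_eq_of_forall_sub_mem {s : Finset ℕ} (hs : s.Nonempty) {p : ℕ}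
    (h : ∀ g ∈ s, g ≤ p ∧ p - g ∈ s) : s.min' hs + s.max' hs = p := by
  have hmin := h _ (s.min'_mem hs)
  have hmax := h _ (s.max'_mem hs)
  have := s.min'_le _ hmax.2
  have := s.le_max' _ hmin.2
  omega

noncomputable def primRootsFinset (p : ℕ) : Finset ℕ :=
  (Finset.Ico 1 p).filter fun g : ℕ => orderOf ((g : ZMod p)) = p - 1

theorem primRootsList_eq_sort (p : ℕ) :
    primRootsList p = (primRootsFinset p).sort (· ≤ ·) := rfl

theorem sub_mem_primRootsFinset {p g : ℕ} (h4 : 4 ∣ p - 1) (hg : g ∈ primRootsFinset p) :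
    p - g ∈ primRootsFinset p := by
  simp only [primRootsFinset, mem_filter, mem_Ico] at hg ⊢
  obtain ⟨⟨hg1, hgp⟩, hord⟩ := hg
  refine ⟨⟨by omega, by omega⟩, ?_⟩
  rw [Nat.cast_sub hgp.le, ZMod.natCast_self, zero_sub, orderOf_neg_eq_of_four_dvd (hord ▸ h4),
    hord]

theorem ZMod.exists_isPrimitiveRoot {p : ℕ} [Fact p.Prime] :
    ∃ ζ : ZMod p, IsPrimitiveRoot ζ (p - 1) := by
  obtain ⟨u, hu⟩ := IsCyclic.exists_ofOrder_eq_natCard (α := (ZMod p)ˣ)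
  refine ⟨u, IsPrimitiveRoot.iff_orderOf.mpr ?_⟩
  rw [orderOf_units, hu, Nat.card_eq_fintype_card, ZMod.card_units]

theorem primRootsFinset_eq_image_val {p : ℕ} [Fact p.Prime] :
    primRootsFinset p = (primitiveRoots (p - 1) (ZMod p)).image ZMod.val := by
  have hpos : 0 < p - 1 := Nat.sub_pos_of_lt (Fact.out : p.Prime).one_lt
  ext g
  simp only [primRootsFinset, mem_filter, mem_Ico, mem_image, mem_primitiveRoots hpos,
    ← IsPrimitiveRoot.iff_orderOf]
  constructor
  · rintro ⟨⟨-, hgp⟩, hg⟩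
    exact ⟨g, hg, ZMod.val_cast_of_lt hgp⟩
  · rintro ⟨ζ, hζ, rfl⟩
    refine ⟨⟨Nat.pos_of_ne_zero ((ZMod.val_ne_zero ζ).mpr (hζ.ne_zero hpos.ne')), ζ.val_lt⟩, ?_⟩
    rwa [ZMod.natCast_zmod_val]

theorem card_primRootsFinset {p : ℕ} [Fact p.Prime] :
    #(primRootsFinset p) = Nat.totient (p - 1) := by
  obtain ⟨ζ, hζ⟩ := ZMod.exists_isPrimitiveRoot (p := p)
  rw [primRootsFinset_eq_image_val, card_image_of_injective _ (ZMod.val_injective p),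
    hζ.card_primitiveRoots]

theorem sum_range_seqS (p : ℕ) :
    ∑ n ∈ range (Nat.totient (p - 1) - 1), (seqS p n : ZMod 2) =
      (primRootsList p).getD 0 0 + (primRootsList p).getD (Nat.totient (p - 1) - 1) 0 := by
  rw [← CharTwo.sum_range_add_succ (fun i => ((primRootsList p).getD i 0 : ZMod 2))]
  refine sum_congr rfl fun n hn => ?_
  rw [seqS, Nat.mod_eq_of_lt (mem_range.mp hn), ZMod.natCast_mod, Nat.cast_add]

theorem period_sum_eq_one_general (p : ℕ) (hp : Nat.Prime p) (h4 : p % 4 = 1) :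
    (∑ n ∈ Finset.range (Nat.totient (p - 1) - 1), ((seqS p n : ZMod 2))) = 1 := by
  have : Fact p.Prime := ⟨hp⟩
  have hcard := card_primRootsFinset (p := p)
  have hne : (primRootsFinset p).Nonempty :=
    card_pos.mp (by rw [hcard]; exact Nat.totient_pos.mpr (Nat.sub_pos_of_lt hp.one_lt))
  have hreflect : ∀ g ∈ primRootsFinset p, g ≤ p ∧ p - g ∈ primRootsFinset p := fun g hg =>
    ⟨(mem_Ico.mp (mem_filter.mp hg).1).2.le, sub_mem_primRootsFinset (by omega) hg⟩
  rw [sum_range_seqS, ← hcard, primRootsList_eq_sort, getD_sort_zero _ hne,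
    getD_sort_card_sub_one _ hne, ← Nat.cast_add, min'_add_max'_eq_of_forall_sub_mem hne hreflect]
  exact ZMod.natCast_eq_one_iff_odd.mpr (Nat.odd_iff.mpr (by omega))

/-- For a prime `p ≥ 11` with `p ≡ 1 (mod 4)`, the sum `S(1) = Σ_{n=0}^{T-1} s_n`
over one period equals `1` in `F_2`, i.e. it is odd. -/
theorem period_sum_eq_one (p : ℕ) (hp : Nat.Prime p) (h11 : 11 ≤ p) (h4 : p % 4 = 1) :
    (∑ n ∈ Finset.range (Nat.totient (p - 1) - 1), ((seqS p n : ZMod 2))) = 1 :=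
  period_sum_eq_one_general p hp h4
end
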